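/- arXiv:1709.07329 — 3 statements merged into one kernel-verified Lean document; each statement's English description precedes it below -/
import Mathlib

section
/- Let ζ be a nonnegative random variable on a probability space (Ω, F, P). Then the map x ↦ e^{−xζ} from (0,∞) to L^∞(P) is analytic: for every y > 0 and every x with |x − y| < y, one has e^{−xζ} = Σ_{n≥0} A_n(y)(x−y)^n with A_n(y) = ((−1)^n/n!) ζ^n e^{−yζ} ∈ L^∞(P), the series converging in the L^∞ norm. -/
/-!
Pointwise, the Taylor series of `e^{-xζ}` at `y` is the exponential series of `-(x - y)ζ` times
`e^{-yζ}`. Since `tⁿ e^{-t} / n! ≤ 1` for `t ≥ 0`, the coefficients satisfy `‖A_n(y)‖_∞ ≤ y⁻ⁿ`,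
so the series converges in `L^∞` on `|x - y| < y`; its `L^∞` sum agrees a.e. with the pointwise
sum because norm convergence forces a.e. convergence along a subsequence.
-/

open MeasureTheory Filter Set
open scoped ENNReal NNReal Nat

theorem Real.norm_taylorCoeff_exp_neg_mul_le {y s : ℝ} (hy : 0 < y) (hs : 0 ≤ s) (n : ℕ) :
    ‖(-1 : ℝ) ^ n / n ! * s ^ n * Real.exp (-y * s)‖ ≤ y⁻¹ ^ n := by
  have hys : (y * s) ^ n / n ! * Real.exp (-(y * s)) ≤ 1 := by
    have := mul_le_mul_of_nonneg_right (Real.pow_div_factorial_le_exp _ (mul_nonneg hy.le hs) n)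
      (Real.exp_pos (-(y * s))).le
    rwa [← Real.exp_add, add_neg_cancel, Real.exp_zero] at this
  calc ‖(-1 : ℝ) ^ n / n ! * s ^ n * Real.exp (-y * s)‖
      = (y * s) ^ n / n ! * Real.exp (-(y * s)) * y⁻¹ ^ n := by
        rw [Real.norm_eq_abs, abs_mul, abs_mul, abs_div, abs_pow, abs_neg, abs_one, one_pow,
          abs_pow, abs_of_nonneg hs, abs_of_pos (Real.exp_pos _), Nat.abs_cast, mul_pow, inv_pow]
        field_simp
    _ ≤ y⁻¹ ^ n := mul_le_of_le_one_left (by positivity) hys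

theorem Real.hasSum_taylorCoeff_exp_neg_mul (x y s : ℝ) :
    HasSum (fun n : ℕ => (x - y) ^ n * ((-1 : ℝ) ^ n / n ! * s ^ n * Real.exp (-y * s)))
      (Real.exp (-x * s)) := by
  have h := (NormedSpace.expSeries_div_hasSum_exp (-(x - y) * s)).mul_right (Real.exp (-y * s))
  rw [← Real.exp_eq_exp_ℝ, ← Real.exp_add, show -(x - y) * s + -y * s = -x * s by ring] at h
  refine h.congr_fun fun n => ?_
  rw [mul_pow, neg_pow (x - y)]
  ring

theorem MeasureTheory.Lp.hasSum_of_ae_hasSum {α E : Type*} {m : MeasurableSpace α}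
    {μ : Measure α} [NormedAddCommGroup E] {p : ℝ≥0∞} [Fact (1 ≤ p)]
    {f : ℕ → Lp E p μ} {u : ℕ → α → E} {s : α → E} {S : Lp E p μ} (hf : Summable f)
    (hfu : ∀ n, f n =ᵐ[μ] u n) (hu : ∀ᵐ ω ∂μ, HasSum (fun n => u n ω) (s ω))
    (hS : S =ᵐ[μ] s) : HasSum f S := by
  obtain ⟨T, hT⟩ := hf
  suffices T = S from this ▸ hT
  refine Lp.ext (EventuallyEq.trans ?_ hS.symm)
  obtain ⟨ns, hns, hT_ae⟩ :=
    (tendstoInMeasure_of_tendsto_Lp hT.tendsto_sum_nat).exists_seq_tendsto_ae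
  have hpartial : ∀ᵐ ω ∂μ, ∀ N, (∑ n ∈ Finset.range N, f n) ω = ∑ n ∈ Finset.range N, u n ω := by
    refine ae_all_iff.2 fun N => ?_
    filter_upwards [Lp.coeFn_fun_finsetSum (Finset.range N) f, ae_all_iff.2 hfu] with ω hω hωu
    rw [hω]
    exact Finset.sum_congr rfl fun n _ => hωu n
  filter_upwards [hT_ae, hu, hpartial] with ω hωT hωu hωN
  refine tendsto_nhds_unique hωT ?_
  simp only [hωN]
  exact hωu.tendsto_sum_nat.comp hns.tendsto_atTop

theorem hasFPowerSeriesOnBall_mkPiRing_of_hasSum {𝕜 E : Type*} [RCLike 𝕜]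
    [NormedAddCommGroup E] [NormedSpace 𝕜 E] {g : 𝕜 → E} {a : ℕ → E} {y : 𝕜} {r : ℝ≥0∞}
    (hr : 0 < r) (h : ∀ z : 𝕜, ‖z‖ₑ < r → HasSum (fun n => z ^ n • a n) (g (y + z))) :
    HasFPowerSeriesOnBall g (fun n => ContinuousMultilinearMap.mkPiRing 𝕜 (Fin n) (a n)) y r where
  r_le := by
    refine ENNReal.le_of_forall_nnreal_lt fun ρ hρ => FormalMultilinearSeries.le_radius_of_tendsto
      _ (l := 0) ?_
    have := (h ((ρ : ℝ) : 𝕜) (by simpa [← ofReal_norm] using hρ)).summable.tendsto_atTop_zero.norm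
    simpa [norm_smul, ContinuousMultilinearMap.norm_mkPiRing, mul_comm] using this
  r_pos := hr
  hasSum hz := by
    simpa [ContinuousMultilinearMap.mkPiRing_apply] using h _ (by simpa using hz)

theorem exp_neg_mul_analytic_Linfty_general
    {Ω : Type*} {m : MeasurableSpace Ω} {P : Measure Ω} [IsProbabilityMeasure P]
    (ζ : Ω → ℝ) (hζnonneg : ∀ ω, 0 ≤ ζ ω)
    -- `g x` is the element `e^{-x ζ}` of `L^∞(P)` (for `x > 0`)
    (g : ℝ → Lp ℝ ∞ P)
    (hg : ∀ x : ℝ, 0 < x → (g x : Ω → ℝ) =ᵐ[P] fun ω => Real.exp (-x * ζ ω))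
    -- `A y n` is the element `((-1)^n / n!) ζ^n e^{-y ζ}` of `L^∞(P)` (for `y > 0`)
    (A : ℝ → ℕ → Lp ℝ ∞ P)
    (hA : ∀ y : ℝ, 0 < y → ∀ n : ℕ, (A y n : Ω → ℝ) =ᵐ[P]
      fun ω => ((-1 : ℝ) ^ n / n.factorial) * ζ ω ^ n * Real.exp (-y * ζ ω)) :
    -- the map `x ↦ e^{-xζ}` is analytic from `(0, ∞)` to `L^∞(P)`, and for every `y > 0` and
    -- every `x` with `|x - y| < y` the Taylor series `Σ_n A_n(y) (x-y)^n` converges to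
    -- `e^{-xζ}` in the `L^∞` norm
    AnalyticOnNhd ℝ g (Ioi 0) ∧
      ∀ y : ℝ, 0 < y → ∀ x : ℝ, |x - y| < y →
        HasSum (fun n : ℕ => (x - y) ^ n • A y n) (g x) := by
  have hA_norm (y : ℝ) (hy : 0 < y) (n : ℕ) : ‖A y n‖ ≤ y⁻¹ ^ n := by
    have hbound : ∀ᵐ ω ∂P, ‖(A y n : Ω → ℝ) ω‖ ≤ y⁻¹ ^ n := (hA y hy n).mono fun ω hω => by
      rw [hω]; exact Real.norm_taylorCoeff_exp_neg_mul_le hy (hζnonneg ω) n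
    simpa using Lp.norm_le_of_ae_bound (by positivity) hbound
  have hTaylor (y : ℝ) (hy : 0 < y) (x : ℝ) (hxy : |x - y| < y) :
      HasSum (fun n : ℕ => (x - y) ^ n • A y n) (g x) := by
    have hx : 0 < x := by linarith [(abs_lt.1 hxy).1]
    have hsummable : Summable fun n : ℕ => (x - y) ^ n • A y n := by
      refine .of_norm_bounded (summable_geometric_of_lt_one (by positivity)
        ((div_lt_one hy).2 hxy)) fun n => ?_
      rw [norm_smul, norm_pow, Real.norm_eq_abs, div_pow, div_eq_mul_inv, ← inv_pow]
      exact mul_le_mul_of_nonneg_left (hA_norm y hy n) (by positivity)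
    refine Lp.hasSum_of_ae_hasSum hsummable (fun n => ?_)
      (ae_of_all _ fun ω => Real.hasSum_taylorCoeff_exp_neg_mul x y (ζ ω)) (hg x hx)
    filter_upwards [Lp.coeFn_smul ((x - y) ^ n) (A y n), hA y hy n] with ω hsmul hω
    rw [hsmul, Pi.smul_apply, hω, smul_eq_mul]
  refine ⟨fun y hy => ?_, hTaylor⟩
  refine (hasFPowerSeriesOnBall_mkPiRing_of_hasSum (a := A y) (ENNReal.ofReal_pos.2 hy)
    fun z hz => ?_).analyticAt
  have hzy : |y + z - y| < y := by
    rwa [add_sub_cancel_left, ← Real.norm_eq_abs, ← ENNReal.ofReal_lt_ofReal_iff_of_nonneg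
      (norm_nonneg z), ofReal_norm]
  simpa using hTaylor y hy (y + z) hzy

theorem exp_neg_mul_analytic_Linfty
    {Ω : Type*} {m : MeasurableSpace Ω} {P : Measure Ω} [IsProbabilityMeasure P]
    (ζ : Ω → ℝ) (hζmeas : Measurable ζ) (hζnonneg : ∀ ω, 0 ≤ ζ ω)
    -- `g x` is the element `e^{-x ζ}` of `L^∞(P)` (for `x > 0`)
    (g : ℝ → Lp ℝ ∞ P)
    (hg : ∀ x : ℝ, 0 < x → (g x : Ω → ℝ) =ᵐ[P] fun ω => Real.exp (-x * ζ ω))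
    -- `A y n` is the element `((-1)^n / n!) ζ^n e^{-y ζ}` of `L^∞(P)` (for `y > 0`)
    (A : ℝ → ℕ → Lp ℝ ∞ P)
    (hA : ∀ y : ℝ, 0 < y → ∀ n : ℕ, (A y n : Ω → ℝ) =ᵐ[P]
      fun ω => ((-1 : ℝ) ^ n / n.factorial) * ζ ω ^ n * Real.exp (-y * ζ ω)) :
    -- the map `x ↦ e^{-xζ}` is analytic from `(0, ∞)` to `L^∞(P)`, and for every `y > 0` and
    -- every `x` with `|x - y| < y` the Taylor series `Σ_n A_n(y) (x-y)^n` converges to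
    -- `e^{-xζ}` in the `L^∞` norm
    AnalyticOnNhd ℝ g (Ioi 0) ∧
      ∀ y : ℝ, 0 < y → ∀ x : ℝ, |x - y| < y →
        HasSum (fun n : ℕ => (x - y) ^ n • A y n) (g x) :=
  exp_neg_mul_analytic_Linfty_general (m := m) ζ hζnonneg g hg A hA
end

section
/- Let U be an open connected set in ℝ^d and x ↦ σ(x) an analytic map from U into the space of real k×l matrices. Set m = sup_{y∈U} rank σ(y) and E = {x ∈ U : rank σ(x) < m}. Then there exists a real-analytic function f on U, not identically zero, such that E = {x ∈ U : f(x) = 0}. In particular, E has Lebesgue measure zero, and if d = 1 then E consists of isolated points of U. -/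
/-!
The sum `F` of the squares of all `mr × mr` minors of `σ` is analytic and vanishes exactly where
`rank σ < mr`; since the supremum `mr` is attained somewhere in `U`, `F` is not identically zero.

The zero set of an analytic function `f ≢ 0` on a connected open set is null. At each zero some
iterated derivative of `f` is nonzero (identity theorem), so taking the first nonvanishing order,
the zero is a point where some coordinate derivative `g = ∂^v f` vanishes while `∂_i g` does not.
Near such a point every line parallel to `e_i` meets `{g = 0}` at most once (Rolle), so these
countably many sets are null by Fubini. For `d = 1` the zeros of `F` are isolated.
-/

open MeasureTheory Filter Set
open scoped ENNReal NNReal Topology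

attribute [local instance] Matrix.frobeniusNormedAddCommGroup Matrix.frobeniusNormedSpace

noncomputable section

open Matrix Module Submodule
open scoped ContDiff

section Minors

variable {K : Type*} [Field K] {m n : Type*} [Fintype m] [Fintype n]

lemma exists_linearIndependent_comp_of_le_finrank_span {ι V : Type*} [Finite ι] [AddCommGroup V]
    [Module K V] {v : ι → V} {r : ℕ} (h : r ≤ finrank K (span K (range v))) :
    ∃ g : Fin r → ι, LinearIndependent K (v ∘ g) := by
  obtain ⟨κ, a, ha, hspan, hli⟩ := exists_linearIndependent' K v
  have : Finite κ := Finite.of_injective a ha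
  have := Fintype.ofFinite κ
  rw [← hspan, finrank_span_eq_card hli] at h
  obtain ⟨u⟩ : Nonempty (Fin r ↪ κ) := Function.Embedding.nonempty_of_card_le (by simpa using h)
  exact ⟨a ∘ u, hli.comp u u.injective⟩

lemma Matrix.exists_linearIndependent_rows_of_le_rank {A : Matrix m n K} {r : ℕ}
    (h : r ≤ A.rank) : ∃ f : Fin r → m, LinearIndependent K (A.submatrix f id) := by
  rw [rank_eq_finrank_span_row] at h
  exact exists_linearIndependent_comp_of_le_finrank_span h

lemma Matrix.exists_submatrix_det_ne_zero_of_le_rank {A : Matrix m n K} {r : ℕ}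
    (h : r ≤ A.rank) : ∃ (f : Fin r → m) (g : Fin r → n), (A.submatrix f g).det ≠ 0 := by
  obtain ⟨g, hg⟩ :=
    exists_linearIndependent_rows_of_le_rank (A := Aᵀ) (r := r) (by rwa [rank_transpose])
  have hcols : r ≤ (A.submatrix id g).rank := by
    rw [← rank_transpose, transpose_submatrix,
      LinearIndependent.rank_matrix (M := Aᵀ.submatrix g id) hg, Fintype.card_fin]
  obtain ⟨f, hf⟩ := exists_linearIndependent_rows_of_le_rank hcols
  exact ⟨f, g, ((isUnit_iff_isUnit_det _).mp (linearIndependent_rows_iff_isUnit.mp hf)).ne_zero⟩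

theorem Matrix.le_rank_iff_exists_submatrix_det_ne_zero {A : Matrix m n K} {r : ℕ} :
    r ≤ A.rank ↔ ∃ (f : Fin r → m) (g : Fin r → n), (A.submatrix f g).det ≠ 0 :=
  ⟨exists_submatrix_det_ne_zero_of_le_rank, fun ⟨f, g, h⟩ => by
    simpa [rank_of_det_ne_zero h] using rank_submatrix_le A f g⟩

end Minors

section SumSqMinors

variable {K : Type*} [Field K] [LinearOrder K] [IsStrictOrderedRing K] {m n : Type*} [Fintype m]
  [Fintype n]

def Matrix.sumSqMinors (r : ℕ) (A : Matrix m n K) : K :=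
  ∑ pq : (Fin r → m) × (Fin r → n), (A.submatrix pq.1 pq.2).det ^ 2

theorem Matrix.sumSqMinors_eq_zero_iff {r : ℕ} {A : Matrix m n K} :
    A.sumSqMinors r = 0 ↔ A.rank < r := by
  rw [sumSqMinors, Finset.sum_eq_zero_iff_of_nonneg fun _ _ => sq_nonneg _, ← not_le,
    le_rank_iff_exists_submatrix_det_ne_zero]
  simp

end SumSqMinors

section Analytic

variable {E : Type*} [NormedAddCommGroup E] [NormedSpace ℝ E] {U : Set E} {m n : Type*}
  [Fintype m] [Fintype n]

lemma AnalyticOnNhd.matrix_apply {σ : E → Matrix m n ℝ} (hσ : AnalyticOnNhd ℝ σ U) (i : m)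
    (j : n) : AnalyticOnNhd ℝ (fun x => σ x i j) U :=
  (entryLinearMap ℝ ℝ i j).toContinuousLinearMap.comp_analyticOnNhd hσ

lemma analyticOnNhd_det_of_forall_apply [DecidableEq n] {σ : E → Matrix n n ℝ}
    (hσ : ∀ i j, AnalyticOnNhd ℝ (fun x => σ x i j) U) :
    AnalyticOnNhd ℝ (fun x => (σ x).det) U := by
  simp only [det_apply']
  exact Finset.analyticOnNhd_fun_sum _ fun τ _ => analyticOnNhd_const.mul <|
    Finset.analyticOnNhd_fun_prod _ fun i _ => hσ (τ i) i

lemma AnalyticOnNhd.sumSqMinors {σ : E → Matrix m n ℝ} (hσ : AnalyticOnNhd ℝ σ U) (r : ℕ) :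
    AnalyticOnNhd ℝ (fun x => (σ x).sumSqMinors r) U :=
  Finset.analyticOnNhd_fun_sum _ fun pq _ =>
    (analyticOnNhd_det_of_forall_apply fun i j => hσ.matrix_apply (pq.1 i) (pq.2 j)).fun_pow 2

end Analytic

theorem EuclideanSpace.volume_eq_zero_of_forall_volume_line_eq_zero {d : ℕ}
    {A : Set (EuclideanSpace ℝ (Fin d))} (hA : MeasurableSet A) (i : Fin d)
    (h : ∀ z, volume {t : ℝ | z + t • EuclideanSpace.single i 1 ∈ A} = 0) : volume A = 0 := by
  obtain ⟨n, rfl⟩ := Nat.exists_eq_add_one_of_ne_zero i.pos.ne'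
  let Φ : ℝ × (Fin n → ℝ) ≃ᵐ EuclideanSpace ℝ (Fin (n + 1)) :=
    (MeasurableEquiv.piFinSuccAbove (fun _ => ℝ) i).symm.trans (MeasurableEquiv.toLp 2 _)
  have hΦ : MeasurePreserving Φ :=
    (PiLp.volume_preserving_toLp _).comp (volume_preserving_piFinSuccAbove (fun _ => ℝ) i).symm
  have hline : ∀ t x, Φ (t, x) = Φ (0, x) + t • EuclideanSpace.single i 1 := by
    intro t x
    ext j
    rcases i.eq_self_or_eq_succAbove j with rfl | ⟨j, rfl⟩ <;> simp [Φ]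
  rw [← hΦ.measure_preimage_equiv, Measure.volume_eq_prod,
    Measure.prod_apply_symm (Φ.measurable hA)]
  have hslice : ∀ x, (fun t => (t, x)) ⁻¹' (Φ ⁻¹' A) =
      {t : ℝ | Φ (0, x) + t • EuclideanSpace.single i 1 ∈ A} := fun x => by
    ext t
    rw [mem_preimage, mem_preimage, hline]
    rfl
  simp [hslice, h]

theorem Convex.subsingleton_setOf_add_smul_mem_and_eq_zero {E : Type*} [NormedAddCommGroup E]
    [NormedSpace ℝ E] {K : Set E} (hK : Convex ℝ K) {g : E → ℝ} {v : E}
    (hg : ∀ y ∈ K, DifferentiableAt ℝ g y) (hv : ∀ y ∈ K, fderiv ℝ g y v ≠ 0) (z : E) :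
    {t : ℝ | z + t • v ∈ K ∧ g (z + t • v) = 0}.Subsingleton := by
  let L : ℝ → E := fun t => z + t • v
  have hderiv : ∀ t, L t ∈ K → HasDerivAt (g ∘ L) (fderiv ℝ g (L t) v) t := fun t ht => by
    simpa using (hg _ ht).hasFDerivAt.comp_hasDerivAt t
      (((hasDerivAt_id t).smul_const v).const_add z)
  have hLK : (L ⁻¹' K).OrdConnected := by
    have hL : L = AffineMap.lineMap z (z + v) := by
      ext t
      simp [L, AffineMap.lineMap_apply, add_comm]
    exact hL ▸ (hK.affine_preimage _).ordConnected
  suffices ∀ a b, a < b → L a ∈ K → L b ∈ K → g (L a) = 0 → g (L b) = 0 → False by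
    intro a ⟨haK, ha⟩ b ⟨hbK, hb⟩
    by_contra hab
    rcases lt_or_gt_of_ne hab with hab | hab
    exacts [this a b hab haK hbK ha hb, this b a hab hbK haK hb ha]
  intro a b hab haK hbK ha hb
  have hIcc : Icc a b ⊆ L ⁻¹' K := hLK.out haK hbK
  obtain ⟨c, hc, hc0⟩ := exists_hasDerivAt_eq_zero hab
    (fun t ht => (hderiv t (hIcc ht)).continuousAt.continuousWithinAt) (ha.trans hb.symm)
    (fun t ht => hderiv t (hIcc (Ioo_subset_Icc_self ht)))
  exact hv _ (hIcc (Ioo_subset_Icc_self hc)) hc0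

theorem volume_setOf_eq_zero_and_fderiv_single_ne_zero {d : ℕ}
    {U : Set (EuclideanSpace ℝ (Fin d))} (hU : IsOpen U) {g : EuclideanSpace ℝ (Fin d) → ℝ}
    (hg : ContDiffOn ℝ 1 g U) (i : Fin d) :
    volume {y ∈ U | g y = 0 ∧ fderiv ℝ g y (EuclideanSpace.single i 1) ≠ 0} = 0 := by
  set e : EuclideanSpace ℝ (Fin d) := EuclideanSpace.single i 1
  have hdiff : ∀ y ∈ U, DifferentiableAt ℝ g y := fun y hy =>
    (hg.differentiableOn one_ne_zero).differentiableAt (hU.mem_nhds hy)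
  have hcont : ContinuousOn (fun y => fderiv ℝ g y e) U :=
    (hg.continuousOn_fderiv_of_isOpen hU le_rfl).clm_apply continuousOn_const
  refine measure_null_of_locally_null _ fun x ⟨hxU, _, hx⟩ => ?_
  obtain ⟨ε, hε, hball⟩ : ∃ ε > 0, Metric.closedBall x ε ⊆ {y ∈ U | fderiv ℝ g y e ≠ 0} :=
    Metric.nhds_basis_closedBall.mem_iff.mp <|
      inter_mem (hU.mem_nhds hxU) ((hcont.continuousAt (hU.mem_nhds hxU)).eventually_ne hx)
  refine ⟨_, inter_mem_nhdsWithin _ (Metric.closedBall_mem_nhds x hε),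
    measure_mono_null (t := Metric.closedBall x ε ∩ g ⁻¹' {0}) ?_ ?_⟩
  · rintro y ⟨⟨-, hy, -⟩, hyB⟩
    exact ⟨hyB, hy⟩
  have hgB : ContinuousOn g (Metric.closedBall x ε) :=
    hg.continuousOn.mono fun y hy => (hball hy).1
  refine EuclideanSpace.volume_eq_zero_of_forall_volume_line_eq_zero
    (hgB.preimage_isClosed_of_isClosed Metric.isClosed_closedBall isClosed_singleton).measurableSet
    i fun z => Set.Subsingleton.measure_zero ?_ _
  exact (convex_closedBall x ε).subsingleton_setOf_add_smul_mem_and_eq_zero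
    (fun y hy => hdiff y (hball hy).1) (fun y hy => (hball hy).2) z

theorem AnalyticAt.eventually_eq_zero_of_forall_iteratedFDeriv_eq_zero {𝕜 E F : Type*}
    [NontriviallyNormedField 𝕜] [CharZero 𝕜] [NormedAddCommGroup E] [NormedSpace 𝕜 E]
    [NormedAddCommGroup F] [NormedSpace 𝕜 F] [CompleteSpace F] {f : E → F} {x : E}
    (hf : AnalyticAt 𝕜 f x) (h : ∀ n, iteratedFDeriv 𝕜 n f x = 0) : ∀ᶠ y in 𝓝 x, f y = 0 := by
  obtain ⟨p, r, hp⟩ := hf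
  have h0 : ∀ᶠ y in 𝓝 (0 : E), f (x + y) = 0 := by
    filter_upwards [Metric.eball_mem_nhds 0 hp.r_pos] with y hy
    have hsum := hp.hasSum_iteratedFDeriv hy
    simp only [h, _root_.zero_apply, smul_zero] at hsum
    exact hsum.unique hasSum_zero
  have htend : Tendsto (fun y => y - x) (𝓝 x) (𝓝 0) := by
    simpa using (continuous_sub_right x).tendsto x
  filter_upwards [htend.eventually h0] with y hy
  simpa using hy

theorem ContinuousMultilinearMap.exists_apply_basis_ne_zero {R ι M N : Type*} [CommSemiring R]
    [AddCommMonoid M] [Module R M] [AddCommMonoid N] [Module R N] [TopologicalSpace M]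
    [TopologicalSpace N] {m : ℕ} (b : Basis ι R M)
    {T : ContinuousMultilinearMap R (fun _ : Fin m => M) N} (hT : T ≠ 0) :
    ∃ w : Fin m → ι, T (fun j => b (w j)) ≠ 0 := by
  by_contra! h
  refine hT (toMultilinearMap_injective ?_)
  exact Basis.ext_multilinear (fun _ => b) fun w => by simpa using h w

section IteratedPartialDeriv

variable {d : ℕ} {f : EuclideanSpace ℝ (Fin d) → ℝ}

def iteratedPartialDeriv {m : ℕ} (v : Fin m → Fin d) (f : EuclideanSpace ℝ (Fin d) → ℝ)
    (y : EuclideanSpace ℝ (Fin d)) : ℝ :=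
  iteratedFDeriv ℝ m f y fun j => EuclideanSpace.single (v j) 1

protected lemma AnalyticOnNhd.iteratedPartialDeriv {U : Set (EuclideanSpace ℝ (Fin d))}
    (hf : AnalyticOnNhd ℝ f U) {m : ℕ} (v : Fin m → Fin d) :
    AnalyticOnNhd ℝ (iteratedPartialDeriv v f) U :=
  (ContinuousMultilinearMap.apply ℝ (fun _ : Fin m => EuclideanSpace ℝ (Fin d)) ℝ
    fun j => EuclideanSpace.single (v j) 1).comp_analyticOnNhd (hf.iteratedFDeriv m)

lemma fderiv_iteratedPartialDeriv_single {m : ℕ} {y : EuclideanSpace ℝ (Fin d)}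
    (hf : DifferentiableAt ℝ (iteratedFDeriv ℝ m f) y) (v : Fin m → Fin d) (i : Fin d) :
    fderiv ℝ (iteratedPartialDeriv v f) y (EuclideanSpace.single i 1) =
      iteratedPartialDeriv (Fin.cons i v) f y := by
  rw [iteratedPartialDeriv, iteratedFDeriv_succ_apply_left,
    ← fderiv_continuousMultilinear_apply_const_apply hf]
  rfl

theorem exists_iteratedPartialDeriv_eq_zero_and_fderiv_ne_zero {x : EuclideanSpace ℝ (Fin d)}
    (hf : ContDiffAt ℝ ∞ f x) (hfx : f x = 0) (hN : ∃ N, iteratedFDeriv ℝ N f x ≠ 0) :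
    ∃ (m : ℕ) (v : Fin m → Fin d) (i : Fin d), iteratedPartialDeriv v f x = 0 ∧
      fderiv ℝ (iteratedPartialDeriv v f) x (EuclideanSpace.single i 1) ≠ 0 := by
  classical
  obtain ⟨m, hm0, hm1⟩ :
      ∃ m, iteratedFDeriv ℝ m f x = 0 ∧ iteratedFDeriv ℝ (m + 1) f x ≠ 0 := by
    have hpos : Nat.find hN ≠ 0 := by
      intro h0
      have hspec := Nat.find_spec hN
      rw [h0] at hspec
      exact hspec (by ext; simp [hfx])
    obtain ⟨m, hm⟩ := Nat.exists_eq_add_one_of_ne_zero hpos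
    exact ⟨m, not_not.mp (Nat.find_min hN (by omega)), hm ▸ Nat.find_spec hN⟩
  obtain ⟨w, hw⟩ := ContinuousMultilinearMap.exists_apply_basis_ne_zero
    (EuclideanSpace.basisFun (Fin d) ℝ).toBasis hm1
  refine ⟨m, Fin.tail w, w 0, by simp [iteratedPartialDeriv, hm0], ?_⟩
  have hdiff := hf.differentiableAt_iteratedFDeriv (by exact_mod_cast ENat.natCast_lt_top m)
  rw [fderiv_iteratedPartialDeriv_single hdiff, Fin.cons_self_tail]
  simpa [iteratedPartialDeriv] using hw

end IteratedPartialDeriv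

theorem AnalyticOnNhd.volume_setOf_eq_zero {d : ℕ} {U : Set (EuclideanSpace ℝ (Fin d))}
    {f : EuclideanSpace ℝ (Fin d) → ℝ} (hf : AnalyticOnNhd ℝ f U) (hU : IsOpen U)
    (hUc : IsPreconnected U) {x₀ : EuclideanSpace ℝ (Fin d)} (hx₀ : x₀ ∈ U) (hfx₀ : f x₀ ≠ 0) :
    volume {x ∈ U | f x = 0} = 0 := by
  have hcover : {x ∈ U | f x = 0} ⊆ ⋃ (m : ℕ) (v : Fin m → Fin d) (i : Fin d),
      {y ∈ U | iteratedPartialDeriv v f y = 0 ∧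
        fderiv ℝ (iteratedPartialDeriv v f) y (EuclideanSpace.single i 1) ≠ 0} := by
    rintro x ⟨hxU, hfx⟩
    have hN : ∃ N, iteratedFDeriv ℝ N f x ≠ 0 := by
      by_contra! h
      exact hfx₀ (hf.eqOn_zero_of_preconnected_of_eventuallyEq_zero hUc hxU
        ((hf x hxU).eventually_eq_zero_of_forall_iteratedFDeriv_eq_zero h) hx₀)
    obtain ⟨m, v, i, h⟩ :=
      exists_iteratedPartialDeriv_eq_zero_and_fderiv_ne_zero (hf x hxU).contDiffAt hfx hN
    exact mem_iUnion₂.mpr ⟨m, v, mem_iUnion.mpr ⟨i, hxU, h⟩⟩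
  refine measure_mono_null hcover <| measure_iUnion_null fun m => measure_iUnion_null fun v =>
    measure_iUnion_null fun i => ?_
  exact volume_setOf_eq_zero_and_fderiv_single_ne_zero hU
    (hf.iteratedPartialDeriv v).contDiffOn_of_completeSpace i

theorem AnalyticOnNhd.eventually_ne_zero_of_finrank_eq_one {𝕜 E F : Type*}
    [NontriviallyNormedField 𝕜] [CompleteSpace 𝕜] [NormedAddCommGroup E] [NormedSpace 𝕜 E]
    [FiniteDimensional 𝕜 E] [NormedAddCommGroup F] [NormedSpace 𝕜 F] (hE : finrank 𝕜 E = 1)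
    {U : Set E} {f : E → F} (hf : AnalyticOnNhd 𝕜 f U) (hU : IsPreconnected U) {x₀ x : E}
    (hx₀ : x₀ ∈ U) (hfx₀ : f x₀ ≠ 0) (hx : x ∈ U) : ∀ᶠ y in 𝓝[≠] x, f y ≠ 0 := by
  obtain ⟨κ⟩ : Nonempty (E ≃L[𝕜] 𝕜) :=
    FiniteDimensional.nonempty_continuousLinearEquiv_of_finrank_eq (hE.trans (finrank_self 𝕜).symm)
  have hfκ : AnalyticAt 𝕜 (f ∘ κ.symm) (κ x) :=
    (hf x hx).comp_of_eq (κ.symm.analyticAt _) (κ.symm_apply_apply x)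
  rcases hfκ.eventually_eq_zero_or_eventually_ne_zero with h | h
  · rw [← κ.map_nhds_eq, eventually_map] at h
    exact absurd (hf.eqOn_zero_of_preconnected_of_eventuallyEq_zero hU hx
      (by simpa [EventuallyEq] using h) hx₀) hfx₀
  · rw [← show map κ (𝓝[≠] x) = 𝓝[≠] (κ x) from κ.toHomeomorph.map_punctured_nhds_eq x,
      eventually_map] at h
    simpa using h

theorem Set.Nonempty.exists_eq_biSup_of_bddAbove {α : Type*} {s : Set α} (hs : s.Nonempty)
    {r : α → ℕ} (hr : BddAbove (r '' s)) : ∃ y ∈ s, r y = ⨆ x ∈ s, r x := by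
  have : Nonempty s := hs.to_subtype
  have hr' : BddAbove (range fun x : s => r x) := by rwa [← image_eq_range]
  rw [← ciSup_subtype_fun hr' (by simp)]
  obtain ⟨⟨y, hy⟩, hry⟩ := Nat.sSup_mem (range_nonempty _) hr'
  exact ⟨y, hy, hry⟩

theorem analytic_matrix_field_rank_degeneracy
    {d k l : ℕ}
    (U : Set (EuclideanSpace ℝ (Fin d))) (hUopen : IsOpen U) (hUconn : IsConnected U)
    (σ : EuclideanSpace ℝ (Fin d) → Matrix (Fin k) (Fin l) ℝ)
    (hσ : AnalyticOnNhd ℝ σ U)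
    -- `mr = sup_{y ∈ U} rank σ(y)` and `E = {x ∈ U : rank σ(x) < mr}`
    (mr : ℕ) (hmr : mr = ⨆ y ∈ U, (σ y).rank)
    (E : Set (EuclideanSpace ℝ (Fin d))) (hE : E = {x ∈ U | (σ x).rank < mr}) :
    -- there is a real-analytic function `f` on `U`, not identically zero, whose zero set
    -- in `U` is exactly `E`
    (∃ f : EuclideanSpace ℝ (Fin d) → ℝ,
      AnalyticOnNhd ℝ f U ∧ (∃ x ∈ U, f x ≠ 0) ∧ E = {x ∈ U | f x = 0}) ∧
    -- in particular, `E` has Lebesgue measure zero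
    volume E = 0 ∧
    -- and if `d = 1` then `E` consists of isolated points
    (d = 1 → ∀ x ∈ E, 𝓝[E \ {x}] x = ⊥) := by
  obtain ⟨y₀, hy₀U, hy₀⟩ := hUconn.nonempty.exists_eq_biSup_of_bddAbove
    (r := fun y => (σ y).rank) ⟨l, by rintro _ ⟨y, -, rfl⟩; simpa using rank_le_card_width (σ y)⟩
  set F := fun x => (σ x).sumSqMinors mr
  have hFan : AnalyticOnNhd ℝ F U := hσ.sumSqMinors mr
  have hEF : E = {x ∈ U | F x = 0} := by simp only [hE, F, sumSqMinors_eq_zero_iff]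
  have hFy₀ : F y₀ ≠ 0 := by simp [F, sumSqMinors_eq_zero_iff, hmr, hy₀]
  refine ⟨⟨F, hFan, ⟨y₀, hy₀U, hFy₀⟩, hEF⟩,
    hEF ▸ hFan.volume_setOf_eq_zero hUopen hUconn.isPreconnected hy₀U hFy₀, ?_⟩
  rintro rfl x hx
  rw [hEF] at hx ⊢
  rw [← eventually_false_iff_eq_bot]
  filter_upwards [nhdsWithin_mono x (fun y hy => hy.2) <| hFan.eventually_ne_zero_of_finrank_eq_one
    (by simp) hUconn.isPreconnected hy₀U hFy₀ hx.1, self_mem_nhdsWithin] with y hy hyE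
  exact hy hyE.1.2
end
end

section
/- Let (ε_n)_{n≥1} be an i.i.d. sequence with P(ε_n = 1) = P(ε_n = −1) = 1/2, let F_0 be the trivial σ-algebra and F_n = σ(ε_1, …, ε_n). Let (x_n)_{n≥1} be a sequence in ℝ, let x ∈ ℝ with x ∉ {x_n : n ≥ 1}, and define the bounded martingale M_n(x) = Σ_{k=1}^n ((x − x_k)/(2^k(1+|x_k|))) ε_k. Then every martingale (N_n)_{n≥0} with respect to (F_n) admits a representation as a discrete stochastic integral of M(x): there exist random variables γ_k, k ≥ 1, with γ_k measurable with respect to F_{k−1}, such that N_n = N_0 + Σ_{k=1}^n γ_k (M_k(x) − M_{k−1}(x)) almost surely for every n ≥ 0. -/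
/-!
Write `D_k = N_k - N_{k-1}` and `c_k = (x - x_k) / (2^k (1 + |x_k|))`, so that
`M_k - M_{k-1} = c_k ε_k` with `c_k ≠ 0` because `x ≠ x_k`. Since `F_k = F_{k-1} ∨ σ(ε_k)` and
`ε_k = ±1`, every `F_k`-measurable function is affine in `ε_k` with `F_{k-1}`-measurable
coefficients; for the martingale increment `D_k` the constant coefficient is `E[D_k | F_{k-1}] = 0`,
and independence of `ε_k` from `F_{k-1}` identifies the slope as `E[D_k ε_k | F_{k-1}]`. Hence
`D_k = γ_k (M_k - M_{k-1})` with `γ_k = c_k⁻¹ E[D_k ε_k | F_{k-1}]`, and the increments telescope.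
Measurably, the affine decomposition is replaced by testing against the π-system of sets
`A ∩ {ε_k ∈ S}` with `A ∈ F_{k-1}`.
-/

open MeasureTheory Filter Set ProbabilityTheory

theorem Finset.sum_Icc_one_sub_pred {A : Type*} [AddCommGroup A] (f : ℕ → A) (n : ℕ) :
    ∑ k ∈ Finset.Icc 1 n, (f k - f (k - 1)) = f n - f 0 := by
  induction n with
  | zero => simp
  | succ n ih =>
    rw [Finset.sum_Icc_succ_top (Nat.le_add_left 1 n), ih, Nat.add_sub_cancel]
    abel

namespace MeasurableSpace

variable {Ω : Type*}

theorem isPiSystem_image2_inter {C D : Set (Set Ω)} (hC : IsPiSystem C) (hD : IsPiSystem D) :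
    IsPiSystem (image2 (· ∩ ·) C D) := by
  rintro _ ⟨a₁, ha₁, b₁, hb₁, rfl⟩ _ ⟨a₂, ha₂, b₂, hb₂, rfl⟩ hne
  have hne' : (a₁ ∩ a₂) ∩ (b₁ ∩ b₂) = (a₁ ∩ b₁) ∩ (a₂ ∩ b₂) := by
    rw [inter_inter_inter_comm]
  rw [← hne'] at hne ⊢
  exact mem_image2_of_mem (hC _ ha₁ _ ha₂ (hne.mono inter_subset_left))
    (hD _ hb₁ _ hb₂ (hne.mono inter_subset_right))

theorem generateFrom_image2_inter_measurableSet (m₁ m₂ : MeasurableSpace Ω) :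
    generateFrom (image2 (· ∩ ·) {s | MeasurableSet[m₁] s} {s | MeasurableSet[m₂] s}) =
      m₁ ⊔ m₂ := by
  refine le_antisymm (generateFrom_le ?_) (sup_le (fun s hs => ?_) (fun s hs => ?_))
  · rintro _ ⟨a, ha, b, hb, rfl⟩
    exact (le_sup_left (b := m₂) a ha).inter (le_sup_right (a := m₁) b hb)
  · exact measurableSet_generateFrom ⟨s, hs, univ, .univ, inter_univ s⟩
  · exact measurableSet_generateFrom ⟨univ, .univ, s, hs, univ_inter s⟩

end MeasurableSpace

section

variable {Ω : Type*} {m : MeasurableSpace Ω} {P : Measure Ω}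

theorem setIntegral_eq_zero_of_forall_inter {m₁ m₂ : MeasurableSpace Ω} (hm₁ : m₁ ≤ m)
    (hm₂ : m₂ ≤ m) {Y : Ω → ℝ} (hY : Integrable Y P)
    (h : ∀ a b, MeasurableSet[m₁] a → MeasurableSet[m₂] b → ∫ ω in a ∩ b, Y ω ∂P = 0)
    {t : Set Ω} (ht : MeasurableSet[m₁ ⊔ m₂] t) : ∫ ω in t, Y ω ∂P = 0 := by
  have hle : m₁ ⊔ m₂ ≤ m := sup_le hm₁ hm₂
  induction t, ht using MeasurableSpace.induction_on_inter
    (MeasurableSpace.generateFrom_image2_inter_measurableSet m₁ m₂).symm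
    (MeasurableSpace.isPiSystem_image2_inter
      (@MeasurableSpace.isPiSystem_measurableSet _ m₁)
      (@MeasurableSpace.isPiSystem_measurableSet _ m₂)) with
  | empty => simp
  | basic t ht =>
    obtain ⟨a, ha, b, hb, rfl⟩ := ht
    exact h a b ha hb
  | compl t ht iht =>
    have := integral_add_compl (hle t ht) hY
    rw [iht, zero_add] at this
    rw [this, ← setIntegral_univ]
    simpa using h univ univ .univ .univ
  | iUnion f hf hfm ihf =>
    rw [integral_iUnion (fun i => hle _ (hfm i)) hf hY.integrableOn]
    simp [ihf]

theorem ae_eq_one_or_neg_one_of_measure_eq_half [IsProbabilityMeasure P] {e : Ω → ℝ}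
    (he : Measurable e) (h₁ : P {ω | e ω = 1} = 1 / 2) (h₂ : P {ω | e ω = -1} = 1 / 2) :
    ∀ᵐ ω ∂P, e ω = 1 ∨ e ω = -1 := by
  have hmeas (c : ℝ) : MeasurableSet {ω | e ω = c} := he (measurableSet_singleton c)
  have hdisj : Disjoint {ω | e ω = 1} {ω | e ω = -1} :=
    disjoint_left.mpr fun ω (h1 : e ω = 1) (h2 : e ω = -1) => by norm_num [h1] at h2
  have hunion : P ({ω | e ω = 1} ∪ {ω | e ω = -1}) = 1 := by
    rw [measure_union hdisj (hmeas _), h₁, h₂, ENNReal.add_halves]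
  rw [← prob_compl_eq_zero_iff ((hmeas _).union (hmeas _))] at hunion
  rw [ae_iff]
  simpa [compl_def, not_or] using hunion

theorem integral_eq_zero_of_measure_eq_half [IsProbabilityMeasure P] {e : Ω → ℝ}
    (he : Measurable e) (h₁ : P {ω | e ω = 1} = 1 / 2) (h₂ : P {ω | e ω = -1} = 1 / 2) :
    ∫ ω, e ω ∂P = 0 := by
  have hmeas (c : ℝ) : MeasurableSet {ω | e ω = c} := he (measurableSet_singleton c)
  have hsplit : e =ᵐ[P] fun ω => {ω | e ω = 1}.indicator 1 ω - {ω | e ω = -1}.indicator 1 ω := by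
    filter_upwards [ae_eq_one_or_neg_one_of_measure_eq_half he h₁ h₂] with ω hω
    rcases hω with hω | hω <;> norm_num [indicator, hω]
  rw [integral_congr_ae hsplit,
    integral_sub ((integrable_const 1).indicator (hmeas _))
      ((integrable_const 1).indicator (hmeas _)),
    integral_indicator_one (hmeas _), integral_indicator_one (hmeas _), measureReal_def,
    measureReal_def, h₁, h₂, sub_self]

theorem MeasureTheory.Integrable.mul_of_ae_eq_one_or_neg_one {e Y : Ω → ℝ} (hY : Integrable Y P)
    (he : Measurable e) (he_pm : ∀ᵐ ω ∂P, e ω = 1 ∨ e ω = -1) :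
    Integrable (Y * e) P :=
  hY.mul_bdd he.aestronglyMeasurable (c := 1) <| by
    filter_upwards [he_pm] with ω hω
    rcases hω with hω | hω <;> simp [hω]

theorem ae_eq_zero_of_condExp_eq_zero_of_condExp_mul_eq_zero [IsFiniteMeasure P]
    {F : MeasurableSpace Ω} (hF : F ≤ m) {e : Ω → ℝ} (he : Measurable[m] e)
    (he_pm : ∀ᵐ ω ∂P, e ω = 1 ∨ e ω = -1) {Y : Ω → ℝ} (hY : Integrable Y P)
    (hYm : StronglyMeasurable[F ⊔ MeasurableSpace.comap e inferInstance] Y)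
    (hYF : P[Y | F] =ᵐ[P] 0) (hYeF : P[Y * e | F] =ᵐ[P] 0) :
    Y =ᵐ[P] 0 := by
  have hle : F ⊔ MeasurableSpace.comap e inferInstance ≤ m := sup_le hF he.comap_le
  have hYe : Integrable (Y * e) P := hY.mul_of_ae_eq_one_or_neg_one he he_pm
  have hzero {f : Ω → ℝ} (hf : Integrable f P) (hfF : P[f | F] =ᵐ[P] 0) {A : Set Ω}
      (hA : MeasurableSet[F] A) : ∫ ω in A, f ω ∂P = 0 := by
    rw [← setIntegral_condExp hF hf hA, setIntegral_congr_ae (hF A hA) (hfF.mono fun _ h _ => h)]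
    simp
  -- on `{e = ±1}` every function of `e` is affine in `e`
  have hinter (A B : Set Ω) (hA : MeasurableSet[F] A)
      (hB : MeasurableSet[MeasurableSpace.comap e inferInstance] B) :
      ∫ ω in A ∩ B, Y ω ∂P = 0 := by
    obtain ⟨S, hS, rfl⟩ := hB
    set g := S.indicator (1 : ℝ → ℝ)
    have haffine : (e ⁻¹' S).indicator Y =ᵐ[P]
        fun ω => (g 1 + g (-1)) / 2 * Y ω + (g 1 - g (-1)) / 2 * (Y * e) ω := by
      filter_upwards [he_pm] with ω hω
      rcases hω with hω | hω <;>
        by_cases h : e ω ∈ S <;> simp_all [g, indicator] <;> ring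
    rw [← setIntegral_indicator (he hS),
      setIntegral_congr_ae (hF A hA) (haffine.mono fun _ h _ => h),
      integral_add (hY.integrableOn.const_mul _) (hYe.integrableOn.const_mul _),
      integral_const_mul, integral_const_mul, hzero hY hYF hA, hzero hYe hYeF hA]
    ring
  refine ae_eq_of_forall_setIntegral_eq_of_sigmaFinite' hle (fun s _ _ => hY.integrableOn)
    (fun s _ _ => integrableOn_zero) (fun s hs _ => ?_) hYm.aestronglyMeasurable
    aestronglyMeasurable_zero
  rw [setIntegral_eq_zero_of_forall_inter hF he.comap_le hY hinter hs]
  simp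

theorem ae_eq_condExp_mul_mul_of_condExp_eq_zero [IsFiniteMeasure P]
    {F : MeasurableSpace Ω} (hF : F ≤ m) {e : Ω → ℝ} (he : Measurable[m] e)
    (he_pm : ∀ᵐ ω ∂P, e ω = 1 ∨ e ω = -1) (he_int : ∫ ω, e ω ∂P = 0)
    (hindep : Indep (MeasurableSpace.comap e inferInstance) F P) {D : Ω → ℝ}
    (hD : Integrable D P) (hDm : StronglyMeasurable[F ⊔ MeasurableSpace.comap e inferInstance] D)
    (hDF : P[D | F] =ᵐ[P] 0) :
    D =ᵐ[P] P[D * e | F] * e := by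
  set B := P[D * e | F]
  have hB : StronglyMeasurable[F] B := stronglyMeasurable_condExp
  have hBint : Integrable B P := integrable_condExp
  have he_comap : Measurable[MeasurableSpace.comap e inferInstance] e := comap_measurable e
  have hBe : Integrable (B * e) P := hBint.mul_of_ae_eq_one_or_neg_one he he_pm
  have he_intble : Integrable e P := Integrable.of_bound he.aestronglyMeasurable 1 <|
    he_pm.mono fun ω hω => by rcases hω with hω | hω <;> simp [hω]
  have hBeF : P[B * e | F] =ᵐ[P] 0 := by
    filter_upwards [condExp_mul_of_stronglyMeasurable_left hB hBe he_intble,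
      condExp_indep_eq he.comap_le hF he_comap.stronglyMeasurable hindep] with ω h₁ h₂
    simpa [h₂, he_int] using h₁
  have hYF : P[D - B * e | F] =ᵐ[P] 0 := by
    filter_upwards [condExp_sub hD hBe F, hDF, hBeF] with ω h h₁ h₂
    simp_all
  have hYeF : P[(D - B * e) * e | F] =ᵐ[P] 0 := by
    have hYe : (D - B * e) * e =ᵐ[P] D * e - B := by
      filter_upwards [he_pm] with ω hω
      rcases hω with hω | hω <;> simp only [Pi.mul_apply, Pi.sub_apply, hω] <;> ring
    filter_upwards [condExp_congr_ae (m := F) hYe,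
      condExp_sub (hD.mul_of_ae_eq_one_or_neg_one he he_pm) hBint F] with ω h₁ h₂
    simp [h₁, h₂, condExp_of_stronglyMeasurable hF hB hBint, B]
  have hYm : StronglyMeasurable[F ⊔ MeasurableSpace.comap e inferInstance] (D - B * e) :=
    hDm.sub ((hB.mono le_sup_left).mul (he_comap.stronglyMeasurable.mono le_sup_right))
  filter_upwards [ae_eq_zero_of_condExp_eq_zero_of_condExp_mul_eq_zero hF he he_pm
    (hD.sub hBe) hYm hYF hYeF] with ω hω
  simpa [sub_eq_zero] using hω

section Filtration

variable {β : Type*} [MeasurableSpace β] {ε : ℕ → Ω → β} {G : ℕ → MeasurableSpace Ω}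

theorem monotone_of_eq_iSup_comap_Icc
    (hG : ∀ n, G n = ⨆ k ∈ Finset.Icc 1 n, MeasurableSpace.comap (ε k) inferInstance) :
    Monotone G := by
  intro i j hij
  rw [hG, hG]
  exact biSup_mono fun k hk => Finset.Icc_subset_Icc_right hij hk

theorem succ_eq_sup_comap_of_eq_iSup_comap_Icc
    (hG : ∀ n, G n = ⨆ k ∈ Finset.Icc 1 n, MeasurableSpace.comap (ε k) inferInstance) (n : ℕ) :
    G (n + 1) = G n ⊔ MeasurableSpace.comap (ε (n + 1)) inferInstance := by
  have hIcc : Finset.Icc 1 (n + 1) = insert (n + 1) (Finset.Icc 1 n) :=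
    (Finset.insert_Icc_right_eq_Icc_succ (Nat.le_add_left 1 n)).symm
  rw [hG, hG, hIcc, Finset.iSup_insert, sup_comm]

theorem indep_comap_succ_of_eq_iSup_comap_Icc (hε : ∀ n, Measurable (ε n))
    (hindep : iIndepFun ε P)
    (hG : ∀ n, G n = ⨆ k ∈ Finset.Icc 1 n, MeasurableSpace.comap (ε k) inferInstance) (n : ℕ) :
    Indep (MeasurableSpace.comap (ε (n + 1)) inferInstance) (G n) P := by
  have h := indep_iSup_of_disjoint (fun k => (hε k).comap_le) hindep.iIndep
    (S := {n + 1}) (T := ↑(Finset.Icc 1 n)) (by simp)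
  simpa [hG n] using h

end Filtration

theorem martingale_increment_eq_condExp_mul [IsProbabilityMeasure P]
    {ε : ℕ → Ω → ℝ} (hεmeas : ∀ n, Measurable (ε n)) (hεindep : iIndepFun ε P)
    {G : ℕ → MeasurableSpace Ω}
    (hG : ∀ n, G n = ⨆ k ∈ Finset.Icc 1 n, MeasurableSpace.comap (ε k) inferInstance)
    (hGle : ∀ n, G n ≤ m) {N : ℕ → Ω → ℝ} (hNadapted : ∀ n, StronglyMeasurable[G n] (N n))
    (hNint : ∀ n, Integrable (N n) P) (hNmart : ∀ n, P[N (n + 1) | G n] =ᵐ[P] N n) (n : ℕ)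
    (h₁ : P {ω | ε (n + 1) ω = 1} = 1 / 2) (h₂ : P {ω | ε (n + 1) ω = -1} = 1 / 2) :
    N (n + 1) - N n =ᵐ[P] P[(N (n + 1) - N n) * ε (n + 1) | G n] * ε (n + 1) := by
  refine ae_eq_condExp_mul_mul_of_condExp_eq_zero (hGle n) (hεmeas _)
    (ae_eq_one_or_neg_one_of_measure_eq_half (hεmeas _) h₁ h₂)
    (integral_eq_zero_of_measure_eq_half (hεmeas _) h₁ h₂)
    (indep_comap_succ_of_eq_iSup_comap_Icc hεmeas hεindep hG n)
    ((hNint _).sub (hNint n)) ?_ ?_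
  · rw [← succ_eq_sup_comap_of_eq_iSup_comap_Icc hG n]
    exact (hNadapted _).sub ((hNadapted n).mono (monotone_of_eq_iSup_comap_Icc hG n.le_succ))
  · filter_upwards [condExp_sub (hNint (n + 1)) (hNint n) (G n), hNmart n] with ω h h'
    simp [h, h', condExp_of_stronglyMeasurable (hGle n) (hNadapted n) (hNint n)]

end

theorem representation_wrt_M_off_exception_set
    {Ω : Type*} {m : MeasurableSpace Ω} {P : Measure Ω} [IsProbabilityMeasure P]
    -- `(ε_n)_{n ≥ 1}` is an i.i.d. sequence of Rademacher random variables
    (ε : ℕ → Ω → ℝ) (hεmeas : ∀ n, Measurable (ε n))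
    (hεindep : ProbabilityTheory.iIndepFun ε P)
    (hεdist : ∀ n, 1 ≤ n →
      P {ω | ε n ω = 1} = 1 / 2 ∧ P {ω | ε n ω = -1} = 1 / 2)
    -- the filtration: `F_0` trivial and `F_n = σ(ε_1, …, ε_n)`
    (G : ℕ → MeasurableSpace Ω)
    (hG : ∀ n, G n = ⨆ k ∈ Finset.Icc 1 n, MeasurableSpace.comap (ε k) inferInstance)
    (hGle : ∀ n, G n ≤ m)
    -- the sequence `(x_n)` and the point `x ∉ {x_n : n ≥ 1}`
    (xa : ℕ → ℝ) (x : ℝ) (hx : ∀ n, 1 ≤ n → x ≠ xa n)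
    -- the bounded martingale `M_n(x) = Σ_{k=1}^n ((x − x_k)/(2^k (1 + |x_k|))) ε_k`
    (M : ℕ → Ω → ℝ)
    (hM : ∀ n ω, M n ω = ∑ k ∈ Finset.Icc 1 n, ((x - xa k) / (2 ^ k * (1 + |xa k|))) * ε k ω)
    -- `N` is a martingale with respect to `(F_n)`
    (N : ℕ → Ω → ℝ)
    (hNadapted : ∀ n, StronglyMeasurable[G n] (N n))
    (hNint : ∀ n, Integrable (N n) P)
    (hNmart : ∀ n, P[N (n + 1) | G n] =ᵐ[P] N n) :
    -- `N` is a discrete stochastic integral of `M(x)`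
    ∃ γ : ℕ → Ω → ℝ,
      (∀ k, 1 ≤ k → StronglyMeasurable[G (k - 1)] (γ k)) ∧
      ∀ n, ∀ᵐ ω ∂P,
        N n ω = N 0 ω + ∑ k ∈ Finset.Icc 1 n, γ k ω * (M k ω - M (k - 1) ω) := by
  set c : ℕ → ℝ := fun k => (x - xa k) / (2 ^ k * (1 + |xa k|))
  have hc (k : ℕ) (hk : 1 ≤ k) : c k ≠ 0 :=
    div_ne_zero (sub_ne_zero.mpr (hx k hk)) (by positivity)
  have hMinc (k : ℕ) (ω : Ω) : M (k + 1) ω - M k ω = c (k + 1) * ε (k + 1) ω := by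
    rw [hM, hM, Finset.sum_Icc_succ_top (Nat.le_add_left 1 k), add_sub_cancel_left]
  refine ⟨fun k => (c k)⁻¹ • P[(N k - N (k - 1)) * ε k | G (k - 1)],
    fun k _ => stronglyMeasurable_condExp.const_smul _, fun n => ?_⟩
  have hstep : ∀ k ∈ Finset.Icc 1 n, ∀ᵐ ω ∂P, N k ω - N (k - 1) ω =
      ((c k)⁻¹ • P[(N k - N (k - 1)) * ε k | G (k - 1)]) ω * (M k ω - M (k - 1) ω) := by
    intro k hk
    obtain ⟨j, rfl⟩ := Nat.exists_eq_add_of_le' (Finset.mem_Icc.mp hk).1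
    obtain ⟨h₁, h₂⟩ := hεdist (j + 1) (Nat.le_add_left 1 j)
    filter_upwards [martingale_increment_eq_condExp_mul hεmeas hεindep hG hGle hNadapted hNint
      hNmart j h₁ h₂] with ω hω
    have hcj := hc (j + 1) (Nat.le_add_left 1 j)
    simp only [Pi.sub_apply, Pi.mul_apply] at hω
    rw [Nat.add_sub_cancel, hMinc, Pi.smul_apply, smul_eq_mul, hω]
    field_simp
  filter_upwards [(Filter.eventually_all_finset _).mpr hstep] with ω hω
  rw [← Finset.sum_congr rfl hω, Finset.sum_Icc_one_sub_pred (fun k => N k ω)]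
  ring
end
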